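/- arXiv:1701.03522 — 2 statements merged into one kernel-verified Lean document; each statement's English description precedes it below -/
import Mathlib

section
/- Let m ≥ 1 be a natural number, M a real number with M ≥ 2^m, and a_1, …, a_m real numbers with 0 ≤ a_i ≤ 1 for all i. Then ∏_{i=1}^{m} (a_i·M + 1) ≤ (∏_{i=1}^{m} a_i)·M^m + (m+1)·M^{m-1}. -/
/-!
Expanding `∏ (aᵢ M + 1)` over subsets of the indices, the full subset contributes `(∏ aᵢ) M^m` and
every other subset `S` at most `M^|S|`; so the excess is largest when all `aᵢ = 1`, where it is
`(M + 1)^m - M^m`. In the binomial expansion of the latter the `m` terms of degree `m - 1` give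
`m M^(m-1)`, and the fewer than `2^m` terms of degree at most `m - 2` add up to at most
`2^m M^(m-2) ≤ M^(m-1)` because `M ≥ 2^m`.
-/

variable {R : Type*} [CommRing R] [LinearOrder R] [IsStrictOrderedRing R]

theorem Finset.prod_add_one_sub_prod_le {ι : Type*} (s : Finset ι) {x y : ι → R}
    (hx : ∀ i ∈ s, 0 ≤ x i) (hxy : ∀ i ∈ s, x i ≤ y i) :
    ∏ i ∈ s, (x i + 1) - ∏ i ∈ s, x i ≤ ∏ i ∈ s, (y i + 1) - ∏ i ∈ s, y i := by
  induction s using Finset.cons_induction with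
  | empty => simp
  | cons j s hj ih =>
    simp only [Finset.mem_cons, forall_eq_or_imp] at hx hxy
    have hexcess := ih hx.2 hxy.2
    have hprod : ∏ i ∈ s, (x i + 1) ≤ ∏ i ∈ s, (y i + 1) :=
      Finset.prod_le_prod (fun i hi => by linarith [hx.2 i hi]) fun i hi => add_le_add_left (hxy.2 i hi) 1
    have hexcess_nonneg : 0 ≤ ∏ i ∈ s, (x i + 1) - ∏ i ∈ s, x i :=
      sub_nonneg.2 (Finset.prod_le_prod hx.2 fun i _ => le_add_of_nonneg_right zero_le_one)
    rw [Finset.prod_cons, Finset.prod_cons, Finset.prod_cons, Finset.prod_cons]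
    -- `(x + 1) P - x Q = x (P - Q) + P`, and each factor on the right grows
    nlinarith [mul_le_mul hxy.1 hexcess hexcess_nonneg (hx.1.trans hxy.1),
      mul_nonneg hx.1 hexcess_nonneg]

-- `2^(n+1) - n - 2` counts the subsets of `Fin (n + 1)` with at most `n - 1` elements.
theorem add_one_pow_succ_mul_le {M : R} (hM : 1 ≤ M) (n : ℕ) :
    (M + 1) ^ (n + 1) * M ≤ M ^ (n + 2) + (n + 1) * M ^ (n + 1) + (2 ^ (n + 1) - n - 2) * M ^ n := by
  induction n with
  | zero => norm_num; linear_combination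
  | succ n ih =>
    have hcoeff : (0 : R) ≤ 2 ^ (n + 1) - n - 2 := by
      have : n + 2 ≤ 2 ^ (n + 1) := Nat.lt_two_pow_self
      rw [sub_sub, sub_nonneg]
      exact_mod_cast this
    have hpow : M ^ n ≤ M ^ (n + 1) := pow_le_pow_right₀ hM n.le_succ
    calc (M + 1) ^ (n + 1 + 1) * M = (M + 1) * ((M + 1) ^ (n + 1) * M) := by ring
      _ ≤ (M + 1) * (M ^ (n + 2) + (n + 1) * M ^ (n + 1) + (2 ^ (n + 1) - n - 2) * M ^ n) :=
          mul_le_mul_of_nonneg_left ih (by linarith)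
      _ ≤ M ^ (n + 1 + 2) + (↑(n + 1) + 1) * M ^ (n + 1 + 1)
            + (2 ^ (n + 1 + 1) - ↑(n + 1) - 2) * M ^ (n + 1) := by
          push_cast
          linear_combination mul_le_mul_of_nonneg_left hpow hcoeff

theorem add_one_pow_succ_le {M : R} {n : ℕ} (hM : 2 ^ (n + 1) ≤ M) :
    (M + 1) ^ (n + 1) ≤ M ^ (n + 1) + (n + 2) * M ^ n := by
  have hM_pos : 0 < M := lt_of_lt_of_le (by positivity) hM
  have hM_one : 1 ≤ M := le_trans (one_le_pow₀ one_le_two) hM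
  have htail : 2 ^ (n + 1) * M ^ n ≤ M ^ (n + 1) := by
    rw [pow_succ M, mul_comm]
    exact mul_le_mul_of_nonneg_left hM (pow_nonneg hM_pos.le n)
  have hlower : 0 ≤ (n + 2) * M ^ n := by positivity
  refine le_of_mul_le_mul_right ?_ hM_pos
  linear_combination add_one_pow_succ_mul_le hM_one n + htail + hlower

/-- For `m ≥ 1`, a real `M ≥ 2^m` and reals `a_1, …, a_m ∈ [0,1]`,
`∏_{i=1}^{m} (a_i·M + 1) ≤ (∏_{i=1}^{m} a_i)·M^m + (m+1)·M^{m-1}`. -/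
theorem prod_mul_add_one_le (m : ℕ) (hm : 1 ≤ m) (M : ℝ) (hM : (2 : ℝ) ^ m ≤ M)
    (a : Fin m → ℝ) (h0 : ∀ i, 0 ≤ a i) (h1 : ∀ i, a i ≤ 1) :
    ∏ i, (a i * M + 1) ≤ (∏ i, a i) * M ^ m + (m + 1) * M ^ (m - 1) := by
  obtain ⟨n, rfl⟩ : ∃ n, m = n + 1 := ⟨m - 1, by omega⟩
  have hM_nonneg : 0 ≤ M := le_trans (by positivity) hM
  have hexcess := Finset.univ.prod_add_one_sub_prod_le (x := fun i => a i * M) (y := fun _ => M)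
    (fun i _ => mul_nonneg (h0 i) hM_nonneg) (fun i _ => mul_le_of_le_one_left hM_nonneg (h1 i))
  simp only [← Finset.prod_mul_pow_card, Finset.prod_const, Finset.card_univ,
    Fintype.card_fin] at hexcess
  have hpow := add_one_pow_succ_le hM
  push_cast
  linarith
end

section
/- Let b, L, k be natural numbers with k + 1 ≤ L ≤ b, and let n_0 ≥ n_1 ≥ … ≥ n_k ≥ 1 be positive integers. Then, as real numbers, (2^b)^{L-k-1} · (2^b/n_k + 1) · ∏_{i=1}^{k} ((n_i/n_{i-1})·2^b + 1) ≤ (2^b)^L/n_0 + (L+1)·(2^b)^{L-1}. Equivalently, dividing both sides by (2^b)^L, the normalized left-hand side is at most 1/n_0 + (L+1)/2^b. -/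
/-!
Put `ε = 2⁻ᵇ` and divide by `(2^b)^L`: the left-hand side becomes
`(1/n_k + ε) ∏_{i<k} (n_{i+1}/n_i + ε)`, a product of `k + 1` factors `y + ε` with `y ∈ [0, 1]`.
Expanding, such a product exceeds `∏ y` by at most `(1 + ε)^{k+1} - 1`, and `∏ y` telescopes
to `1/n_0`. Finally `(1 + ε)^m ≤ 1 + (m + 1) ε` as soon as `2^m ε ≤ 1`, because the terms of
order `≥ 2` in `ε` of the binomial expansion add up to at most `2^m ε² ≤ ε`.
-/

open Finset

section OrderedRing

variable {R : Type*} [CommRing R] [LinearOrder R] [IsStrictOrderedRing R]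

theorem add_mul_add_sub_one_le {y p ε D : R} (hy : y ≤ 1) (hp : p ≤ 1) (hε : 0 ≤ ε)
    (hD : 1 ≤ D) : (y + ε) * (p + (D - 1)) ≤ y * p + ((1 + ε) * D - 1) := by
  nlinarith [mul_nonneg hε (sub_nonneg.2 hp), mul_nonneg (sub_nonneg.2 hy) (sub_nonneg.2 hD)]

theorem prod_add_le_prod_add_one_add_pow_sub_one {ι : Type*} (s : Finset ι) {y : ι → R}
    {ε : R} (hε : 0 ≤ ε) (hy0 : ∀ i ∈ s, 0 ≤ y i) (hy1 : ∀ i ∈ s, y i ≤ 1) :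
    ∏ i ∈ s, (y i + ε) ≤ ∏ i ∈ s, y i + ((1 + ε) ^ #s - 1) := by
  induction s using Finset.cons_induction with
  | empty => simp
  | cons a s _ ih =>
    simp only [mem_cons, forall_eq_or_imp] at hy0 hy1
    rw [prod_cons, prod_cons, card_cons, pow_succ']
    calc (y a + ε) * ∏ i ∈ s, (y i + ε)
        ≤ (y a + ε) * (∏ i ∈ s, y i + ((1 + ε) ^ #s - 1)) :=
          mul_le_mul_of_nonneg_left (ih hy0.2 hy1.2) (by linarith [hy0.1])
      _ ≤ _ := add_mul_add_sub_one_le hy1.1 (prod_le_one hy0.2 hy1.2) hε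
          (one_le_pow₀ (by linarith))

/-- The sum of the terms of order `≥ 2` in `ε` of `(1 + ε)^m` is at most
`(∑_{j ≥ 2} C(m, j)) ε² = (2^m - m - 1) ε²`. -/
theorem one_add_pow_le_one_add_mul_add_mul_sq {ε : R} (hε0 : 0 ≤ ε) (hε1 : ε ≤ 1) (m : ℕ) :
    (1 + ε) ^ m ≤ 1 + m * ε + (2 ^ m - m - 1) * ε ^ 2 := by
  induction m with
  | zero => simp
  | succ m ih =>
    have hm : (m : R) + 1 ≤ 2 ^ m := by exact_mod_cast Nat.lt_two_pow_self
    rw [pow_succ, pow_succ (2 : R)]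
    push_cast
    nlinarith [mul_le_mul_of_nonneg_right ih (by linarith : (0 : R) ≤ 1 + ε),
      mul_nonneg (mul_nonneg (sq_nonneg ε) (sub_nonneg.2 hm)) (sub_nonneg.2 hε1)]

theorem one_add_pow_le_one_add_succ_mul {ε : R} (hε : 0 ≤ ε) {m : ℕ} (hm : 2 ^ m * ε ≤ 1) :
    (1 + ε) ^ m ≤ 1 + (m + 1) * ε := by
  have hpow : (1 : R) ≤ 2 ^ m := one_le_pow₀ one_le_two
  have hε1 : ε ≤ 1 := by nlinarith
  have hsq : 2 ^ m * ε ^ 2 ≤ ε := by nlinarith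
  have hm_sq : 0 ≤ ((m : R) + 1) * ε ^ 2 := by positivity
  linarith [one_add_pow_le_one_add_mul_add_mul_sq hε hε1 m]

end OrderedRing

theorem prod_range_div_of_ne_zero {K : Type*} [Field K] (f : ℕ → K) (n : ℕ)
    (hf : ∀ i ≤ n, f i ≠ 0) : ∏ i ∈ range n, f (i + 1) / f i = f n / f 0 := by
  induction n with
  | zero => simp [div_self (hf 0 le_rfl)]
  | succ n ih =>
    rw [prod_range_succ, ih fun i hi => hf i (by omega)]
    field_simp [hf n (by omega), hf 0 (by omega), hf (n + 1) le_rfl]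

theorem inv_add_mul_prod_div_add_le {K : Type*} [Field K] [LinearOrder K] [IsStrictOrderedRing K]
    {a : ℕ → K} {ε : K} {k : ℕ} (hε0 : 0 ≤ ε) (hε : 2 ^ (k + 1) * ε ≤ 1)
    (hpos : ∀ i ≤ k, 0 < a i) (hk : 1 ≤ a k) (hmono : ∀ i < k, a (i + 1) ≤ a i) :
    ((a k)⁻¹ + ε) * ∏ i ∈ range k, (a (i + 1) / a i + ε) ≤ (a 0)⁻¹ + (k + 2) * ε := by
  have hratio : ∀ i ∈ range k, 0 ≤ a (i + 1) / a i ∧ a (i + 1) / a i ≤ 1 := fun i hi =>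
    have hi := mem_range.1 hi
    ⟨div_nonneg (hpos (i + 1) hi).le (hpos i hi.le).le,
      (div_le_one (hpos i hi.le)).2 (hmono i hi)⟩
  have hprod := prod_add_le_prod_add_one_add_pow_sub_one (range k) hε0
    (fun i hi => (hratio i hi).1) (fun i hi => (hratio i hi).2)
  rw [card_range] at hprod
  calc _ ≤ ((a k)⁻¹ + ε) * (∏ i ∈ range k, a (i + 1) / a i + ((1 + ε) ^ k - 1)) :=
        mul_le_mul_of_nonneg_left hprod (by positivity)
    _ ≤ (a k)⁻¹ * ∏ i ∈ range k, a (i + 1) / a i + ((1 + ε) * (1 + ε) ^ k - 1) :=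
        add_mul_add_sub_one_le (inv_le_one_of_one_le₀ hk)
          (prod_le_one (fun i hi => (hratio i hi).1) (fun i hi => (hratio i hi).2)) hε0
          (one_le_pow₀ (by linarith))
    _ = (a 0)⁻¹ + ((1 + ε) ^ (k + 1) - 1) := by
        rw [prod_range_div_of_ne_zero a k fun i hi => (hpos i hi).ne', ← pow_succ']
        field_simp [(hpos k le_rfl).ne']
    _ ≤ (a 0)⁻¹ + (k + 2) * ε := by
        have := one_add_pow_le_one_add_succ_mul hε0 hε
        push_cast at this
        linarith

/-- The interval-size bound for the balanced Prefix Embedding: for `k + 1 ≤ L ≤ b` and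
positive integers `n 0 ≥ n 1 ≥ … ≥ n k ≥ 1` (nested subtree sizes),
`(2^b)^{L-k-1} · (2^b/n_k + 1) · ∏_{i=1}^{k} ((n_i/n_{i-1})·2^b + 1)
  ≤ (2^b)^L/n_0 + (L+1)·(2^b)^{L-1}`. -/
theorem prefix_embedding_interval_bound
    (b L k : ℕ) (hkL : k + 1 ≤ L) (hLb : L ≤ b) (n : ℕ → ℕ)
    (hpos : ∀ i ≤ k, 1 ≤ n i) (hmono : ∀ i < k, n (i + 1) ≤ n i) :
    ((2 : ℝ) ^ b) ^ (L - k - 1) * ((2 : ℝ) ^ b / (n k : ℝ) + 1) *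
        ∏ i ∈ Finset.range k, ((n (i + 1) : ℝ) / (n i : ℝ) * (2 : ℝ) ^ b + 1)
      ≤ ((2 : ℝ) ^ b) ^ L / (n 0 : ℝ) + (L + 1) * ((2 : ℝ) ^ b) ^ (L - 1) := by
  set B : ℝ := 2 ^ b
  have hB : 0 < B := by positivity
  have hε : 2 ^ (k + 1) * B⁻¹ ≤ 1 := by
    rw [← div_eq_mul_inv, div_le_one hB]
    exact pow_le_pow_right₀ one_le_two (by omega)
  have key := inv_add_mul_prod_div_add_le (a := fun i => (n i : ℝ)) (inv_nonneg.2 hB.le) hε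
    (fun i hi => by exact_mod_cast hpos i hi) (by exact_mod_cast hpos k le_rfl)
    (fun i hi => by exact_mod_cast hmono i hi)
  have hfactor : ∏ i ∈ range k, ((n (i + 1) : ℝ) / n i * B + 1)
      = B ^ k * ∏ i ∈ range k, ((n (i + 1) : ℝ) / n i + B⁻¹) := by
    rw [pow_eq_prod_const, ← prod_mul_distrib]
    exact prod_congr rfl fun i _ => by field_simp
  have hpowL : B ^ L = B ^ (L - k - 1) * B ^ k * B := by
    rw [← pow_add, ← pow_succ]
    congr 1
    omega
  calc _ = B ^ L * (((n k : ℝ)⁻¹ + B⁻¹) * ∏ i ∈ range k, ((n (i + 1) : ℝ) / n i + B⁻¹)) := by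
        rw [hfactor, hpowL]
        field_simp
    _ ≤ B ^ L * ((n 0 : ℝ)⁻¹ + (k + 2) * B⁻¹) := mul_le_mul_of_nonneg_left key (by positivity)
    _ = B ^ L / n 0 + (k + 2) * B ^ (L - 1) := by
        rw [hpowL, ← pow_add, show L - k - 1 + k = L - 1 by omega]
        field_simp
    _ ≤ _ := by
        gcongr _ + ?_ * _
        exact_mod_cast (by omega : k + 2 ≤ L + 1)
end
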